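/- Fix k₀ > 0 and let θ(k) = −(1/(4k₀²))·(k + k₀²/k) for k ∈ ℂ \ {0}. For every real u ≥ 0, the point k = k₀ + u·k₀·e^{iπ/4} satisfies Re(i·θ(k)) = (√2·u/(8k₀))·(√2·u + u²)/(1 + √2·u + u²), and consequently Re(i·θ(k)) ≥ (1/(4k₀))·u²/(u² + √2·u + 1) and Re(i·θ(k)) ≥ (√2/(8k₀))·u³/(u² + √2·u + 1). -/

import Mathlib

/-!
Since `Im (k₀² / k) = -k₀² Im k / |k|²`, the real part of `i θ(k)` is
`Im k / (4k₀²) · (1 - k₀² / |k|²)`. On the ray `Im k = k₀ u / √2` and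
`|k|² = k₀² (1 + √2 u + u²)`, which gives the closed form; it is the sum of the two
nonnegative lower bounds.
-/

open Complex Real

lemma Complex.im_add_ofReal_div (k : ℂ) (r : ℝ) :
    (k + r / k).im = k.im * (1 - r / normSq k) := by
  rw [add_im, div_eq_mul_inv, im_ofReal_mul, inv_im]
  ring

lemma re_I_mul_phase (a : ℝ) (k : ℂ) :
    (I * (-(1 / (4 * (a : ℂ) ^ 2)) * (k + (a : ℂ) ^ 2 / k))).re
      = k.im / (4 * a ^ 2) * (1 - a ^ 2 / normSq k) := by
  have hc : -(1 / (4 * (a : ℂ) ^ 2)) = ((-(1 / (4 * a ^ 2)) : ℝ) : ℂ) := by push_cast; rfl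
  rw [hc, ← ofReal_pow, I_mul_re, im_ofReal_mul, im_add_ofReal_div]
  ring

lemma exp_pi_div_four_mul_I : exp (π / 4 * I) = (√2 / 2 : ℝ) * (1 + I) := by
  rw [← ofReal_ofNat, ← ofReal_div, exp_mul_I, ← ofReal_cos, ← ofReal_sin, cos_pi_div_four,
    sin_pi_div_four]
  ring

lemma ofReal_add_mul_exp_pi_div_four_mul_I (a u : ℝ) :
    (a : ℂ) + u * a * exp (π / 4 * I) = ⟨a * (1 + u * (√2 / 2)), a * u * (√2 / 2)⟩ := by
  rw [exp_pi_div_four_mul_I, mk_eq_add_mul_I]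
  push_cast
  ring

lemma ray_value_eq_add (k₀ u : ℝ) :
    √2 * u / (8 * k₀) * ((√2 * u + u ^ 2) / (1 + √2 * u + u ^ 2))
      = 1 / (4 * k₀) * (u ^ 2 / (u ^ 2 + √2 * u + 1))
        + √2 / (8 * k₀) * (u ^ 3 / (u ^ 2 + √2 * u + 1)) := by
  have h2 : √2 ^ 2 = 2 := sq_sqrt zero_le_two
  have hD : 1 + √2 * u + u ^ 2 ≠ 0 := by nlinarith [sq_nonneg (√2 * u + 1)]
  have hsplit : √2 * u * ((√2 * u + u ^ 2) / (1 + √2 * u + u ^ 2))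
      = 2 * (u ^ 2 / (1 + √2 * u + u ^ 2)) + √2 * (u ^ 3 / (1 + √2 * u + u ^ 2)) := by
    field_simp
    linear_combination u ^ 2 * h2
  rw [show u ^ 2 + √2 * u + 1 = 1 + √2 * u + u ^ 2 by ring]
  linear_combination hsplit / (8 * k₀)

/-- On the steepest-descent ray k = k₀ + u·k₀·e^{iπ/4}, u ≥ 0, the phase
θ(k) = −(1/(4k₀²))·(k + k₀²/k) satisfies
Re(iθ(k)) = (√2 u/(8k₀))·(√2 u + u²)/(1 + √2 u + u²), and consequently
Re(iθ(k)) ≥ (1/(4k₀))·u²/(u² + √2 u + 1) and Re(iθ(k)) ≥ (√2/(8k₀))·u³/(u² + √2 u + 1). -/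
theorem re_i_theta_on_upper_ray (k₀ u : ℝ) (hk₀ : 0 < k₀) (hu0 : 0 ≤ u) (k : ℂ)
    (hk : k = (k₀ : ℂ) + (u : ℂ) * (k₀ : ℂ) * Complex.exp ((Real.pi / 4) * Complex.I)) :
    (Complex.I * (-(1 / (4 * (k₀ : ℂ) ^ 2)) * (k + (k₀ : ℂ) ^ 2 / k))).re
        = Real.sqrt 2 * u / (8 * k₀) * ((Real.sqrt 2 * u + u ^ 2) / (1 + Real.sqrt 2 * u + u ^ 2)) ∧
      1 / (4 * k₀) * (u ^ 2 / (u ^ 2 + Real.sqrt 2 * u + 1))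
        ≤ (Complex.I * (-(1 / (4 * (k₀ : ℂ) ^ 2)) * (k + (k₀ : ℂ) ^ 2 / k))).re ∧
      Real.sqrt 2 / (8 * k₀) * (u ^ 3 / (u ^ 2 + Real.sqrt 2 * u + 1))
        ≤ (Complex.I * (-(1 / (4 * (k₀ : ℂ) ^ 2)) * (k + (k₀ : ℂ) ^ 2 / k))).re := by
  rw [ofReal_add_mul_exp_pi_div_four_mul_I] at hk
  have h2 : √2 ^ 2 = 2 := sq_sqrt zero_le_two
  have hnormSq : normSq k = k₀ ^ 2 * (1 + √2 * u + u ^ 2) := by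
    rw [hk, normSq_mk]
    linear_combination k₀ ^ 2 * u ^ 2 / 2 * h2
  have hre : (I * (-(1 / (4 * (k₀ : ℂ) ^ 2)) * (k + (k₀ : ℂ) ^ 2 / k))).re
      = √2 * u / (8 * k₀) * ((√2 * u + u ^ 2) / (1 + √2 * u + u ^ 2)) := by
    have hD : 0 < 1 + √2 * u + u ^ 2 := by positivity
    rw [re_I_mul_phase, hnormSq, hk]
    field_simp
    ring
  rw [hre, ray_value_eq_add]
  exact ⟨rfl, le_add_of_nonneg_right (by positivity), le_add_of_nonneg_left (by positivity)⟩
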